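/- arXiv:2002.03993 — 3 statements merged into one kernel-verified Lean document; each statement's English description precedes it below -/
import Mathlib

section
/- Let p ∈ (0,1). For every integer d ≥ 0, ∑_{m=1}^∞ p·(1−p)^{m−1} · ∫_0^∞ (e^{−x}·x^m/m!) · Bi(d; m, (1−e^{−px})/(px)) dx = (p/(1−p)²)·( 1 − ∑_{m=0}^d ((1−p)/p)^m · e^{−(1−p)/p} / m! ) − (p/(1−p))·[d = 0], where [d = 0] equals 1 if d = 0 and 0 otherwise. -/
/-!
Write `p (1-p)^m = p/(1-p) · (1-p)^(m+1)`, so that the sum over `m` is `p/(1-p)` times the series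
`∑ₙ ∫ e^{-x} ((1-p)x)^n/n! · Bi(d; n, η(x)) dx` minus its `n = 0` term `[d = 0]`. Sum and integral
commute because `0 ≤ Bi ≤ 1` and `∫ e^{-x} (tx)^n/n! dx = t^n` with `t = 1-p < 1`. Under the
integral, Poisson thinning sums the series to `e^{-x} (tη)^d/d! · e^{t(1-η)}` with `t = (1-p)x`;
for `η = (1 - e^{-px})/(px)` this is `e^{-px} · e^{-u} u^d/d!` with `u = c (1 - e^{-px})`,
`c = (1-p)/p`. As `u' = (1-p) e^{-px}`, the substitution leaves `1/(1-p)` times the Erlang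
distribution function `∫₀^c e^{-u} u^d/d! du = 1 - ∑_{m ≤ d} c^m e^{-c}/m!`.
-/

open MeasureTheory Real Set Filter

/-- `Bi(d; m, η) = C(m,d) η^d (1-η)^{m-d}`, which is `0` when `d > m`
(since then `C(m,d) = 0`). -/
noncomputable def Bi (d m : ℕ) (η : ℝ) : ℝ :=
  (m.choose d : ℝ) * η ^ d * (1 - η) ^ (m - d)

open Topology
open scoped Nat

lemma Bi_of_lt {d m : ℕ} (η : ℝ) (h : m < d) : Bi d m η = 0 := by
  simp [Bi, Nat.choose_eq_zero_of_lt h]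

lemma Bi_nonneg {d m : ℕ} {η : ℝ} (h0 : 0 ≤ η) (h1 : η ≤ 1) : 0 ≤ Bi d m η := by
  have : 0 ≤ 1 - η := by linarith
  unfold Bi
  positivity

lemma Bi_le_one {d m : ℕ} {η : ℝ} (h0 : 0 ≤ η) (h1 : η ≤ 1) : Bi d m η ≤ 1 := by
  rcases lt_or_ge m d with hmd | hdm
  · simp [Bi_of_lt η hmd]
  have h1η : 0 ≤ 1 - η := by linarith
  calc Bi d m η = η ^ d * (1 - η) ^ (m - d) * m.choose d := by rw [Bi]; ring
    _ ≤ ∑ k ∈ Finset.range (m + 1), η ^ k * (1 - η) ^ (m - k) * m.choose k :=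
      Finset.single_le_sum (f := fun k ↦ η ^ k * (1 - η) ^ (m - k) * m.choose k)
        (fun k _ ↦ by positivity) (Finset.mem_range.2 (by omega))
    _ = 1 := by rw [← add_pow, add_sub_cancel, one_pow]

lemma continuous_Bi (d m : ℕ) : Continuous (Bi d m) := by
  unfold Bi
  fun_prop

lemma hasSum_pow_div_factorial_mul_Bi (d : ℕ) (t η : ℝ) :
    HasSum (fun n ↦ t ^ n / n ! * Bi d n η) ((t * η) ^ d / d ! * exp (t * (1 - η))) := by
  rw [← hasSum_nat_add_iff' d, Finset.sum_eq_zero fun n hn ↦ by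
    rw [Bi_of_lt η (Finset.mem_range.1 hn), mul_zero], sub_zero]
  have hexp : HasSum (fun k : ℕ ↦ (t * (1 - η)) ^ k / k !) (exp (t * (1 - η))) := by
    rw [exp_eq_exp_ℝ]
    exact NormedSpace.expSeries_div_hasSum_exp _
  refine (hexp.mul_left ((t * η) ^ d / d !)).congr_fun fun k ↦ ?_
  rw [Bi, Nat.add_sub_cancel, Nat.cast_choose ℝ (Nat.le_add_left d k), Nat.add_sub_cancel,
    mul_pow, mul_pow]
  field_simp
  ring

lemma hasDerivAt_sum_pow_mul_exp_neg_div_factorial (d : ℕ) (t : ℝ) :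
    HasDerivAt (fun t ↦ ∑ m ∈ Finset.range (d + 1), t ^ m * exp (-t) / m !)
      (-(t ^ d * exp (-t) / d !)) t := by
  induction d with
  | zero => simpa using (hasDerivAt_neg t).exp
  | succ d ih =>
    simp only [Finset.sum_range_succ _ (d + 1)]
    have hlast := (((hasDerivAt_pow (d + 1) t).mul (hasDerivAt_neg t).exp).div_const
      ((d + 1)! : ℝ))
    refine (ih.add hlast).congr_deriv ?_
    rw [Nat.factorial_succ]
    push_cast
    field_simp
    ring

lemma integral_exp_neg_mul_pow_div_factorial (n : ℕ) :
    ∫ x in Ioi (0 : ℝ), exp (-x) * x ^ n / n ! = 1 := by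
  have h : ∫ x in Ioi (0 : ℝ), exp (-x) * x ^ n = n ! := by
    rw [← Gamma_nat_eq_factorial, Gamma_eq_integral (by positivity)]
    simp
  rw [integral_div, h]
  exact div_self (by positivity)

lemma integral_erlang_density_comp_one_sub_exp {a c : ℝ} (ha : 0 < a) (hc : 0 ≤ c) (d : ℕ) :
    ∫ x in Ioi (0 : ℝ), (c * (1 - exp (-(a * x)))) ^ d * exp (-(c * (1 - exp (-(a * x))))) / d !
        * (c * (a * exp (-(a * x))))
      = 1 - ∑ m ∈ Finset.range (d + 1), c ^ m * exp (-c) / m ! := by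
  set u : ℝ → ℝ := fun x ↦ c * (1 - exp (-(a * x)))
  set P : ℝ → ℝ := fun t ↦ ∑ m ∈ Finset.range (d + 1), t ^ m * exp (-t) / (m ! : ℝ)
  have hu : ∀ x, HasDerivAt u (c * (a * exp (-(a * x)))) x := fun x ↦ by
    have := (((hasDerivAt_id x).const_mul a).neg.exp.const_sub 1).const_mul c
    exact this.congr_deriv (by simp [mul_comm])
  have hu_lim : Tendsto u atTop (𝓝 c) := by
    have : Tendsto (fun x ↦ exp (-(a * x))) atTop (𝓝 0) :=
      tendsto_exp_neg_atTop_nhds_zero.comp (tendsto_id.const_mul_atTop ha)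
    simpa [u] using (this.const_sub 1).const_mul c
  have hP0 : P (u 0) = 1 := by
    simp [P, u, Finset.sum_range_succ']
  have key := integral_Ioi_of_hasDerivAt_of_nonneg' (g := fun x ↦ -P (u x)) (a := 0)
    (fun x _ ↦ ((hasDerivAt_sum_pow_mul_exp_neg_div_factorial d (u x)).comp x (hu x)).neg)
    (fun x hx ↦ by
      have : 0 ≤ u x := mul_nonneg hc <| sub_nonneg.2 <| exp_le_one_iff.2 <|
        neg_nonpos.2 (mul_pos ha hx).le
      simp only [neg_mul, neg_neg]
      positivity)
    ((hasDerivAt_sum_pow_mul_exp_neg_div_factorial d c).continuousAt.tendsto.comp hu_lim).neg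
  simp only [neg_mul, neg_neg, hP0] at key
  rw [key]
  ring

lemma hasSum_integral_exp_neg_mul_pow_mul_Bi {t : ℝ} (ht0 : 0 ≤ t) (ht1 : t < 1) (d : ℕ)
    {η : ℝ → ℝ} (hη : Measurable η) (hη01 : ∀ x ∈ Ioi (0 : ℝ), η x ∈ Icc 0 1) :
    HasSum (fun n ↦ ∫ x in Ioi (0 : ℝ), exp (-x) * ((t * x) ^ n / n ! * Bi d n (η x)))
      (∫ x in Ioi (0 : ℝ), exp (-x) * ((t * x * η x) ^ d / d ! * exp (t * x * (1 - η x)))) := by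
  set F : ℕ → ℝ → ℝ := fun n x ↦ exp (-x) * ((t * x) ^ n / n ! * Bi d n (η x))
  set G : ℕ → ℝ → ℝ := fun n x ↦ t ^ n * (exp (-x) * x ^ n / n !)
  have hG_int : ∀ n, IntegrableOn (G n) (Ioi 0) := fun n ↦ by
    have h := GammaIntegral_convergent (s := n + 1) (by positivity)
    simp only [add_sub_cancel_right, rpow_natCast] at h
    exact (h.div_const _).const_mul _
  have hG_integral : ∀ n, ∫ x in Ioi (0 : ℝ), G n x = t ^ n := fun n ↦ by
    rw [integral_const_mul, integral_exp_neg_mul_pow_div_factorial, mul_one]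
  have hFG : ∀ n, ∀ᵐ x ∂volume.restrict (Ioi 0), ‖F n x‖ ≤ G n x := fun n ↦ by
    refine (ae_restrict_iff' measurableSet_Ioi).2 (Eventually.of_forall fun x hx ↦ ?_)
    obtain ⟨h0, h1⟩ := hη01 x hx
    have hx0 : 0 ≤ x := le_of_lt hx
    simp only [F, G]
    rw [Real.norm_of_nonneg (by have := Bi_nonneg (d := d) (m := n) h0 h1; positivity)]
    calc _ ≤ exp (-x) * ((t * x) ^ n / n ! * 1) := by
          gcongr
          exact Bi_le_one h0 h1
      _ = _ := by rw [mul_pow]; ring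
  have hF_int : ∀ n, IntegrableOn (F n) (Ioi 0) := fun n ↦ by
    have := (continuous_Bi d n).measurable.comp hη
    exact (hG_int n).mono' (Measurable.aestronglyMeasurable (by fun_prop)) (hFG n)
  have hF_sum : Summable fun n ↦ ∫ x in Ioi (0 : ℝ), ‖F n x‖ := by
    refine Summable.of_nonneg_of_le (fun n ↦ integral_nonneg fun x ↦ norm_nonneg _)
      (fun n ↦ ?_) (summable_geometric_of_lt_one ht0 ht1)
    rw [← hG_integral n]
    exact integral_mono_ae (hF_int n).norm (hG_int n) (hFG n)
  rw [← setIntegral_congr_fun (f := fun x ↦ ∑' n, F n x) measurableSet_Ioi fun x _ ↦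
    ((hasSum_pow_div_factorial_mul_Bi d (t * x) (η x)).mul_left (exp (-x))).tsum_eq]
  exact hasSum_integral_of_summable_integral_norm hF_int hF_sum

lemma one_sub_exp_neg_div_mem_Icc {y : ℝ} (hy : 0 < y) : (1 - exp (-y)) / y ∈ Icc 0 1 := by
  refine ⟨div_nonneg (sub_nonneg.2 (exp_le_one_iff.2 (by linarith))) hy.le, ?_⟩
  rw [div_le_one hy]
  linarith [add_one_le_exp (-y)]

lemma exp_neg_mul_thinning_eq {p x : ℝ} (hp : p ≠ 0) (hp1 : 1 - p ≠ 0) (hx : x ≠ 0) (d : ℕ)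
    {η c : ℝ} (hη : η = (1 - exp (-(p * x))) / (p * x)) (hc : c = (1 - p) / p) :
    exp (-x) * (((1 - p) * x * η) ^ d / d ! * exp ((1 - p) * x * (1 - η))) =
      (c * (1 - exp (-(p * x)))) ^ d * exp (-(c * (1 - exp (-(p * x))))) / d !
        * (c * (p * exp (-(p * x)))) / (1 - p) := by
  have hu : (1 - p) * x * η = c * (1 - exp (-(p * x))) := by
    rw [hη, hc]
    field_simp
  have hexp : exp (-x) * exp ((1 - p) * x * (1 - η)) =
      exp (-(p * x)) * exp (-(c * (1 - exp (-(p * x))))) := by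
    rw [← exp_add, ← exp_add, mul_one_sub, hu]
    ring_nf
  have hcp : c * p = 1 - p := by
    rw [hc]
    field_simp
  rw [hu, ← mul_assoc c, hcp, mul_div_assoc, mul_div_cancel_left₀ _ hp1]
  linear_combination (c * (1 - exp (-(p * x)))) ^ d / d ! * hexp

theorem stmt_17 (p : ℝ) (hp : 0 < p) (hp1 : p < 1) (d : ℕ) :
    (∑' m : ℕ, p * (1 - p) ^ m *
      ∫ x in Ioi (0 : ℝ),
        Real.exp (-x) * x ^ (m + 1) / (Nat.factorial (m + 1) : ℝ) *
          Bi d (m + 1) ((1 - Real.exp (-(p * x))) / (p * x))) =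
    (p / (1 - p) ^ 2) *
        (1 - ∑ m ∈ Finset.range (d + 1),
          ((1 - p) / p) ^ m * Real.exp (-((1 - p) / p)) / (Nat.factorial m : ℝ))
      - (p / (1 - p)) * (if d = 0 then 1 else 0) := by
  have h1p : 0 < 1 - p := by linarith
  set c := (1 - p) / p with hc
  set η : ℝ → ℝ := fun x ↦ (1 - exp (-(p * x))) / (p * x)
  have hsum := (hasSum_nat_add_iff' 1).2 <| hasSum_integral_exp_neg_mul_pow_mul_Bi h1p.le
    (by linarith) d (η := η) (by fun_prop) fun x hx ↦ one_sub_exp_neg_div_mem_Icc (mul_pos hp hx)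
  have hterm : ∀ m : ℕ, p * (1 - p) ^ m * ∫ x in Ioi (0 : ℝ),
      exp (-x) * x ^ (m + 1) / (m + 1)! * Bi d (m + 1) (η x) =
      p / (1 - p) * ∫ x in Ioi (0 : ℝ), exp (-x) * (((1 - p) * x) ^ (m + 1) / (m + 1)! *
        Bi d (m + 1) (η x)) := fun m ↦ by
    rw [← integral_const_mul, ← integral_const_mul]
    congr 1 with x
    rw [mul_pow]
    field_simp
    ring
  have hzero : ∫ x in Ioi (0 : ℝ), exp (-x) * (((1 - p) * x) ^ 0 / (0)! * Bi d 0 (η x)) =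
      if d = 0 then 1 else 0 := by
    have hBi : ∀ y, Bi d 0 y = if d = 0 then 1 else 0 := by rcases d <;> simp [Bi]
    simp only [pow_zero, Nat.factorial_zero, Nat.cast_one, div_one, one_mul, hBi]
    rw [integral_mul_const, integral_exp_neg_Ioi_zero, one_mul]
  have hlimit : ∫ x in Ioi (0 : ℝ), exp (-x) *
      (((1 - p) * x * η x) ^ d / d ! * exp ((1 - p) * x * (1 - η x))) =
      (1 - ∑ m ∈ Finset.range (d + 1), c ^ m * exp (-c) / m !) / (1 - p) := by
    rw [← integral_erlang_density_comp_one_sub_exp hp (by positivity) d, ← integral_div]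
    exact setIntegral_congr_fun measurableSet_Ioi fun x hx ↦
      exp_neg_mul_thinning_eq hp.ne' h1p.ne' (mem_Ioi.1 hx).ne' d rfl hc
  rw [tsum_congr hterm, tsum_mul_left, hsum.tsum_eq, Finset.sum_range_one, hzero, hlimit, sq,
    ← div_div]
  ring
end

section
/- Let p ∈ (0,1) and let P be the geometric distribution P(k) = p·(1−p)^{k−1} for k ≥ 1. Then for every Lebesgue-measurable f : [0,∞) → [0,1], T(f)(x) = (px − 1 + e^{−px})/(px) + (p/x)·∫_0^∞ min(x,z)·exp(−z·(1 − (1−p)·f(z))) dz for every x > 0, and T(f)(0) = p·∫_0^∞ exp(−z·(1 − (1−p)·f(z))) dz. -/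
/-!
For geometric `P` the generating function of the Erlang densities `e^{-z} z^k / k!` sums in
closed form: `∑ₖ (1-p)^k e^{-z} z^k/k! φ(z)^k = e^{-z(1 - (1-p) φ(z))}`. Every term is bounded
by a geometric weight times an Erlang density of total mass one, so the sum over `k` may be
moved inside all the integrals defining `T(f)`. The inner integral over `(0, y]` (where `φ = 1`)
then becomes `∫₀^y p e^{-pz} dz = 1 - e^{-py}`, and exchanging the order of integration turns
`∫₀^x ∫_y^∞ g(z) dz dy` into `∫₀^∞ min(x, z) g(z) dz`.
-/

open MeasureTheory Real Set Filter

noncomputable def Toper (P : ℕ → ℝ) (f : ℝ → ℝ) : ℝ → ℝ := fun x =>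
  if x = 0 then
    ∑' k : ℕ, P (k + 1) * ∫ z in Ioi (0 : ℝ),
      Real.exp (-z) * z ^ k / (Nat.factorial k : ℝ) * f z ^ k
  else
    (1 / x) * ∑' k : ℕ, P (k + 1) *
      ∫ y in Ioc (0 : ℝ) x,
        ((∫ z in Ioc (0 : ℝ) y, Real.exp (-z) * z ^ k / (Nat.factorial k : ℝ)) +
          ∫ z in Ioi y, Real.exp (-z) * z ^ k / (Nat.factorial k : ℝ) * f z ^ k)

theorem hasSum_mul_integral_of_integral_norm_le {α : Type*} [MeasurableSpace α]
    {μ : Measure α} {c : ℕ → ℝ} (hc : Summable c) {F : ℕ → α → ℝ}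
    (hF : ∀ k, Integrable (F k) μ) {M : ℝ} (hM : ∀ k, ∫ a, ‖F k a‖ ∂μ ≤ M) :
    HasSum (fun k => c k * ∫ a, F k a ∂μ) (∫ a, ∑' k, c k * F k a ∂μ) := by
  simp_rw [← integral_const_mul]
  refine hasSum_integral_of_summable_integral_norm (fun k => (hF k).const_mul (c k)) ?_
  refine Summable.of_nonneg_of_le (fun k => integral_nonneg fun a => norm_nonneg _)
    (fun k => ?_) (hc.abs.mul_right M)
  simp only [norm_mul, integral_const_mul, Real.norm_eq_abs]
  exact mul_le_mul_of_nonneg_left (hM k) (abs_nonneg _)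

theorem MeasureTheory.StronglyMeasurable.setIntegral_prodMk_preimage {α β E : Type*}
    [MeasurableSpace α] [MeasurableSpace β] [NormedAddCommGroup E] [NormedSpace ℝ E]
    {ν : Measure β} [SFinite ν] {G : β → E} (hG : StronglyMeasurable G) {t : Set (α × β)}
    (ht : MeasurableSet t) :
    StronglyMeasurable fun a => ∫ b in Prod.mk a ⁻¹' t, G b ∂ν := by
  have h : ∀ a, ∫ b in Prod.mk a ⁻¹' t, G b ∂ν =
      ∫ b, t.indicator (fun q => G q.2) (a, b) ∂ν :=
    fun a => (integral_indicator (measurable_prodMk_left ht)).symm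
  simp_rw [h]
  exact ((hG.comp_measurable measurable_snd).indicator ht).integral_prod_right'

theorem stronglyMeasurable_setIntegral_Ioi {G : ℝ → ℝ} (hG : Measurable G) :
    StronglyMeasurable fun y => ∫ z in Ioi y, G z :=
  hG.stronglyMeasurable.setIntegral_prodMk_preimage
    (measurableSet_lt measurable_fst measurable_snd)

theorem stronglyMeasurable_setIntegral_Ioc {G : ℝ → ℝ} (hG : Measurable G) (a : ℝ) :
    StronglyMeasurable fun y => ∫ z in Ioc a y, G z :=
  hG.stronglyMeasurable.setIntegral_prodMk_preimage
    ((measurableSet_lt measurable_const measurable_snd).inter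
      (measurableSet_le measurable_snd measurable_fst))

theorem integrableOn_setIntegral_Ioi {g : ℝ → ℝ} (hg : Measurable g)
    (hgi : IntegrableOn g (Ioi 0)) (x : ℝ) :
    IntegrableOn (fun y => ∫ z in Ioi y, g z) (Ioc 0 x) := by
  refine Measure.integrableOn_of_bounded measure_Ioc_lt_top.ne
    (stronglyMeasurable_setIntegral_Ioi hg).aestronglyMeasurable (M := ∫ z in Ioi 0, ‖g z‖) ?_
  filter_upwards [ae_restrict_mem measurableSet_Ioc] with y hy
  exact (norm_integral_le_integral_norm _).trans (setIntegral_mono_set hgi.norm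
    (Eventually.of_forall fun _ => norm_nonneg _) (Ioi_subset_Ioi hy.1.le).eventuallyLE)

theorem volume_real_Iio_inter_Ioc {x z : ℝ} (hx : 0 ≤ x) (hz : 0 ≤ z) :
    volume.real (Iio z ∩ Ioc 0 x) = min x z := by
  rw [measureReal_congr (Iio_ae_eq_Iic.inter (ae_eq_refl (Ioc 0 x)) :
    (Iio z ∩ Ioc 0 x : Set ℝ) =ᵐ[volume] _), inter_comm, Ioc_inter_Iic,
    Real.volume_real_Ioc_of_le (le_min hx hz), sub_zero]

theorem integral_Ioc_integral_Ioi {g : ℝ → ℝ} (hg : IntegrableOn g (Ioi 0)) {x : ℝ}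
    (hx : 0 ≤ x) :
    ∫ y in Ioc 0 x, ∫ z in Ioi y, g z = ∫ z in Ioi 0, min x z * g z := by
  -- cutting `g` off outside `(0, ∞)` makes the integrand integrable on the whole product
  set G := (Ioi (0 : ℝ)).indicator g
  set F : ℝ × ℝ → ℝ := {q | q.1 < q.2}.indicator fun q => G q.2
  have hF : Integrable F ((volume.restrict (Ioc 0 x)).prod volume) :=
    (((integrable_indicator_iff measurableSet_Ioi).2 hg).comp_snd _).indicator
      (measurableSet_lt measurable_fst measurable_snd)
  have h_inner : ∀ y ∈ Ioc 0 x, ∫ z in Ioi y, g z = ∫ z, F (y, z) := fun y hy => by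
    rw [← integral_indicator measurableSet_Ioi]
    refine integral_congr_ae (Eventually.of_forall fun z => ?_)
    by_cases hyz : y < z
    · simp [F, G, hyz, hy.1.trans hyz]
    · simp [F, hyz]
  have h_outer : ∀ z, ∫ y in Ioc 0 x, F (y, z) = min x z * G z := fun z => by
    rcases le_or_gt z 0 with hz | hz
    · have hGz : G z = 0 := indicator_of_notMem (notMem_Ioi.2 hz) g
      simp [F, indicator_apply, hGz]
    have : (fun y => F (y, z)) = (Iio z).indicator fun _ => G z := by
      ext y; simp [F, indicator_apply]
    rw [this, integral_indicator_const _ measurableSet_Iio,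
      measureReal_restrict_apply measurableSet_Iio, volume_real_Iio_inter_Ioc hx hz.le,
      smul_eq_mul]
  rw [setIntegral_congr_fun measurableSet_Ioc h_inner,
    integral_integral_swap (f := fun y z => F (y, z)) hF, ← integral_indicator measurableSet_Ioi]
  simp_rw [h_outer, G, indicator_mul_right]

theorem integral_Ioc_exp_neg_mul {b : ℝ} (hb : b ≠ 0) {y : ℝ} (hy : 0 ≤ y) :
    ∫ z in Ioc 0 y, exp (-(b * z)) = (1 - exp (-(b * y))) / b := by
  have hderiv : ∀ z, HasDerivAt (fun z => exp (-(b * z)) / -b) (exp (-(b * z))) z := fun z => by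
    have h := ((hasDerivAt_id' z).const_mul b).fun_neg.exp.div_const (-b)
    simp only [mul_one] at h
    rwa [mul_div_cancel_right₀ _ (neg_ne_zero.2 hb)] at h
  rw [← intervalIntegral.integral_of_le hy, intervalIntegral.integral_eq_sub_of_hasDerivAt
    (fun z _ => hderiv z) ((by fun_prop : Continuous _).intervalIntegrable _ _)]
  field_simp
  simp only [mul_zero, neg_zero, exp_zero]
  ring

theorem integral_Ioc_one_sub_exp_neg_mul {b : ℝ} (hb : b ≠ 0) {x : ℝ} (hx : 0 ≤ x) :
    ∫ y in Ioc 0 x, (1 - exp (-(b * y))) = x - (1 - exp (-(b * x))) / b := by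
  rw [integral_sub (integrable_const 1)
    (by fun_prop : Continuous fun y => exp (-(b * y))).integrableOn_Ioc,
    integral_Ioc_exp_neg_mul hb hx, setIntegral_const, Real.volume_real_Ioc_of_le hx]
  simp

noncomputable def erlangDensity (k : ℕ) (z : ℝ) : ℝ :=
  exp (-z) * z ^ k / (Nat.factorial k : ℝ)

theorem erlangDensity_nonneg (k : ℕ) {z : ℝ} (hz : 0 ≤ z) : 0 ≤ erlangDensity k z := by
  unfold erlangDensity; positivity

theorem measurable_erlangDensity (k : ℕ) : Measurable (erlangDensity k) := by
  unfold erlangDensity; fun_prop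

theorem integrableOn_erlangDensity (k : ℕ) : IntegrableOn (erlangDensity k) (Ioi 0) := by
  refine IntegrableOn.congr_fun
    ((Real.GammaIntegral_convergent (s := k + 1) (by positivity)).div_const (Nat.factorial k : ℝ))
    (fun z _ => ?_) measurableSet_Ioi
  simp [erlangDensity, Real.rpow_natCast]

theorem integral_erlangDensity (k : ℕ) : ∫ z in Ioi 0, erlangDensity k z = 1 := by
  have h := Real.Gamma_eq_integral (s := k + 1) (by positivity)
  simp only [Real.Gamma_nat_eq_factorial, add_sub_cancel_right, Real.rpow_natCast] at h
  simp only [erlangDensity, integral_div, ← h]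
  exact div_self (by positivity)

theorem hasSum_erlangDensity_mul_pow (z t : ℝ) :
    HasSum (fun k => erlangDensity k z * t ^ k) (exp (-(z * (1 - t)))) := by
  have h := (NormedSpace.expSeries_div_hasSum_exp (z * t)).mul_left (exp (-z))
  rw [← Real.exp_eq_exp_ℝ, ← Real.exp_add] at h
  have hterm : (fun k => erlangDensity k z * t ^ k) =
      fun k => exp (-z) * ((z * t) ^ k / (Nat.factorial k : ℝ)) := by
    ext k; simp only [erlangDensity]; ring
  rwa [hterm, show -(z * (1 - t)) = -z + z * t by ring]

section SetIntegral

variable {S : Set ℝ} {φ : ℝ → ℝ}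

theorem norm_erlangDensity_mul_pow_le (k : ℕ) {z : ℝ} (hz : 0 ≤ z) (hφ : |φ z| ≤ 1) :
    ‖erlangDensity k z * φ z ^ k‖ ≤ erlangDensity k z := by
  rw [norm_mul, norm_pow, Real.norm_of_nonneg (erlangDensity_nonneg k hz), Real.norm_eq_abs]
  exact mul_le_of_le_one_right (erlangDensity_nonneg k hz) (pow_le_one₀ (abs_nonneg _) hφ)

theorem integrableOn_erlangDensity_mul_pow (hS : MeasurableSet S) (hS0 : S ⊆ Ioi 0)
    (hφ : Measurable φ) (hφ1 : ∀ z ∈ S, |φ z| ≤ 1) (k : ℕ) :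
    IntegrableOn (fun z => erlangDensity k z * φ z ^ k) S :=
  ((integrableOn_erlangDensity k).mono_set hS0).mono'
    ((measurable_erlangDensity k).mul (hφ.pow_const k)).aestronglyMeasurable
    (ae_restrict_of_forall_mem hS fun z hz =>
      norm_erlangDensity_mul_pow_le k (hS0 hz).le (hφ1 z hz))

theorem integral_norm_erlangDensity_mul_pow_le_one (hS : MeasurableSet S) (hS0 : S ⊆ Ioi 0)
    (hφ1 : ∀ z ∈ S, |φ z| ≤ 1) (k : ℕ) :
    ∫ z in S, ‖erlangDensity k z * φ z ^ k‖ ≤ 1 :=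
  calc ∫ z in S, ‖erlangDensity k z * φ z ^ k‖
      ≤ ∫ z in S, erlangDensity k z :=
        integral_mono_of_nonneg (Eventually.of_forall fun _ => norm_nonneg _)
          ((integrableOn_erlangDensity k).mono_set hS0)
          (ae_restrict_of_forall_mem hS fun z hz =>
            norm_erlangDensity_mul_pow_le k (hS0 hz).le (hφ1 z hz))
    _ ≤ ∫ z in Ioi 0, erlangDensity k z :=
        setIntegral_mono_set (integrableOn_erlangDensity k)
          (ae_restrict_of_forall_mem measurableSet_Ioi fun _ hz =>
            erlangDensity_nonneg k (le_of_lt hz)) hS0.eventuallyLE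
    _ = 1 := integral_erlangDensity k

theorem hasSum_pow_mul_setIntegral_erlangDensity (hS : MeasurableSet S) (hS0 : S ⊆ Ioi 0)
    (hφ : Measurable φ) (hφ1 : ∀ z ∈ S, |φ z| ≤ 1) {t : ℝ} (ht : |t| < 1) :
    HasSum (fun k => t ^ k * ∫ z in S, erlangDensity k z * φ z ^ k)
      (∫ z in S, exp (-(z * (1 - t * φ z)))) := by
  convert hasSum_mul_integral_of_integral_norm_le (summable_geometric_of_abs_lt_one ht)
    (integrableOn_erlangDensity_mul_pow hS hS0 hφ hφ1)
    (integral_norm_erlangDensity_mul_pow_le_one hS hS0 hφ1) using 3 with z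
  rw [← (hasSum_erlangDensity_mul_pow z (t * φ z)).tsum_eq]
  congr 1 with k
  ring

theorem integrableOn_exp_neg_mul_one_sub_mul (hφ : Measurable φ)
    (hφ1 : ∀ z ∈ Ioi 0, |φ z| ≤ 1) {t : ℝ} (ht : |t| < 1) :
    IntegrableOn (fun z => exp (-(z * (1 - t * φ z)))) (Ioi 0) := by
  refine (exp_neg_integrableOn_Ioi 0 (sub_pos.2 ht)).mono' (by fun_prop)
    (ae_restrict_of_forall_mem measurableSet_Ioi fun z hz => ?_)
  rw [Real.norm_of_nonneg (exp_pos _).le, exp_le_exp]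
  have htφ : t * φ z ≤ |t| := (le_abs_self _).trans
    ((abs_mul t (φ z)).trans_le (mul_le_of_le_one_right (abs_nonneg t) (hφ1 z hz)))
  nlinarith [mul_le_mul_of_nonneg_left htφ (le_of_lt hz)]

end SetIntegral

noncomputable def toperIntegrand (f : ℝ → ℝ) (k : ℕ) (y : ℝ) : ℝ :=
  (∫ z in Ioc 0 y, erlangDensity k z) + ∫ z in Ioi y, erlangDensity k z * f z ^ k

theorem Toper_of_ne_zero (P : ℕ → ℝ) (f : ℝ → ℝ) {x : ℝ} (hx : x ≠ 0) :
    Toper P f x = 1 / x * ∑' k, P (k + 1) * ∫ y in Ioc 0 x, toperIntegrand f k y :=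
  if_neg hx

theorem Toper_zero (P : ℕ → ℝ) (f : ℝ → ℝ) :
    Toper P f 0 = ∑' k, P (k + 1) * ∫ z in Ioi 0, erlangDensity k z * f z ^ k :=
  if_pos rfl

section Geometric

variable {p : ℝ} {f : ℝ → ℝ}

theorem stronglyMeasurable_toperIntegrand (hf : Measurable f) (k : ℕ) :
    StronglyMeasurable (toperIntegrand f k) :=
  (stronglyMeasurable_setIntegral_Ioc (measurable_erlangDensity k) 0).add
    (stronglyMeasurable_setIntegral_Ioi ((measurable_erlangDensity k).mul (hf.pow_const k)))

theorem norm_toperIntegrand_le (hf1 : ∀ z, 0 ≤ z → |f z| ≤ 1) (k : ℕ) {y : ℝ} (hy : 0 ≤ y) :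
    ‖toperIntegrand f k y‖ ≤ 2 := by
  have hIoc := integral_norm_erlangDensity_mul_pow_le_one (φ := fun _ => 1) measurableSet_Ioc
    (fun z hz => hz.1) (fun _ _ => by simp) k (S := Ioc 0 y)
  have hIoi := integral_norm_erlangDensity_mul_pow_le_one measurableSet_Ioi
    (Ioi_subset_Ioi hy) (fun z hz => hf1 z (hy.trans (le_of_lt hz))) k
  simp only [one_pow, mul_one] at hIoc
  calc ‖toperIntegrand f k y‖
      ≤ ‖∫ z in Ioc 0 y, erlangDensity k z‖ + ‖∫ z in Ioi y, erlangDensity k z * f z ^ k‖ :=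
        norm_add_le _ _
    _ ≤ 1 + 1 := add_le_add ((norm_integral_le_integral_norm _).trans hIoc)
        ((norm_integral_le_integral_norm _).trans hIoi)
    _ = 2 := one_add_one_eq_two

theorem hasSum_geometric_mul_toperIntegrand (hq : |1 - p| < 1) (hf : Measurable f)
    (hf1 : ∀ z, 0 ≤ z → |f z| ≤ 1) {y : ℝ} (hy : 0 ≤ y) :
    HasSum (fun k => p * (1 - p) ^ k * toperIntegrand f k y)
      ((1 - exp (-(p * y))) + p * ∫ z in Ioi y, exp (-(z * (1 - (1 - p) * f z)))) := by
  have hp : p ≠ 0 := by rintro rfl; simp at hq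
  have hIoc := hasSum_pow_mul_setIntegral_erlangDensity (φ := fun _ => 1) measurableSet_Ioc
    (fun z hz => hz.1) measurable_const (fun _ _ => by simp) hq (S := Ioc 0 y)
  have hIoi := hasSum_pow_mul_setIntegral_erlangDensity measurableSet_Ioi
    (Ioi_subset_Ioi hy) hf (fun z hz => hf1 z (hy.trans (le_of_lt hz))) hq
  simp only [one_pow, mul_one, sub_sub_cancel] at hIoc
  have hexp : ∫ z in Ioc 0 y, exp (-(z * p)) = (1 - exp (-(p * y))) / p := by
    simp_rw [mul_comm _ p]
    exact integral_Ioc_exp_neg_mul hp hy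
  rw [hexp] at hIoc
  have hsum := (hIoc.add hIoi).mul_left p
  rw [mul_add, mul_div_cancel₀ _ hp] at hsum
  refine hsum.congr_fun fun k => ?_
  rw [toperIntegrand]
  ring

theorem hasSum_geometric_mul_integral_toperIntegrand (hq : |1 - p| < 1) (hf : Measurable f)
    (hf1 : ∀ z, 0 ≤ z → |f z| ≤ 1) {x : ℝ} (hx : 0 ≤ x) :
    HasSum (fun k => p * (1 - p) ^ k * ∫ y in Ioc 0 x, toperIntegrand f k y)
      (x - (1 - exp (-(p * x))) / p +
        p * ∫ z in Ioi 0, min x z * exp (-(z * (1 - (1 - p) * f z)))) := by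
  have hp : p ≠ 0 := by rintro rfl; simp at hq
  have hg : IntegrableOn (fun z => exp (-(z * (1 - (1 - p) * f z)))) (Ioi 0) :=
    integrableOn_exp_neg_mul_one_sub_mul hf (fun z hz => hf1 z (le_of_lt hz)) hq
  have hT_le : ∀ k, ∀ y ∈ Ioc 0 x, ‖toperIntegrand f k y‖ ≤ 2 :=
    fun k y hy => norm_toperIntegrand_le hf1 k hy.1.le
  have hsum := hasSum_mul_integral_of_integral_norm_le (μ := volume.restrict (Ioc 0 x))
    ((summable_geometric_of_abs_lt_one hq).mul_left p)
    (fun k => Measure.integrableOn_of_bounded measure_Ioc_lt_top.ne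
      (stronglyMeasurable_toperIntegrand hf k).aestronglyMeasurable
      (ae_restrict_of_forall_mem measurableSet_Ioc (hT_le k)))
    (M := 2 * x) fun k => by
      refine (Real.le_norm_self _).trans ((norm_setIntegral_le_of_norm_le_const
        measure_Ioc_lt_top fun y hy => (norm_norm _).trans_le (hT_le k y hy)).trans_eq ?_)
      rw [Real.volume_real_Ioc_of_le hx, sub_zero]
  convert hsum using 1
  rw [setIntegral_congr_fun measurableSet_Ioc fun y hy =>
      (hasSum_geometric_mul_toperIntegrand hq hf hf1 hy.1.le).tsum_eq,
    integral_add (by fun_prop : Continuous fun y => 1 - exp (-(p * y))).integrableOn_Ioc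
      ((integrableOn_setIntegral_Ioi (by fun_prop) hg x).const_mul p), integral_const_mul,
    integral_Ioc_one_sub_exp_neg_mul hp hx, integral_Ioc_integral_Ioi hg hx]

end Geometric

theorem stmt_18_general (p : ℝ) (hp : 0 < p) (hp1 : p < 1)
    (P : ℕ → ℝ) (hP : ∀ k : ℕ, 1 ≤ k → P k = p * (1 - p) ^ (k - 1))
    (f : ℝ → ℝ) (hf : Measurable f) (hf01 : ∀ x, 0 ≤ x → f x ∈ Icc (0 : ℝ) 1) :
    (∀ x : ℝ, 0 < x →
      Toper P f x =
        (p * x - 1 + Real.exp (-(p * x))) / (p * x) +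
          (p / x) * ∫ z in Ioi (0 : ℝ),
            min x z * Real.exp (-(z * (1 - (1 - p) * f z)))) ∧
    Toper P f 0 = p * ∫ z in Ioi (0 : ℝ), Real.exp (-(z * (1 - (1 - p) * f z))) := by
  have hq : |1 - p| < 1 := abs_sub_lt_iff.2 ⟨by linarith, by linarith⟩
  have hf1 : ∀ z, 0 ≤ z → |f z| ≤ 1 := fun z hz =>
    abs_le.2 ⟨by linarith [(hf01 z hz).1], (hf01 z hz).2⟩
  have hP' : ∀ k : ℕ, P (k + 1) = p * (1 - p) ^ k := fun k => by
    simpa using hP (k + 1) le_add_self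
  refine ⟨fun x hx => ?_, ?_⟩
  · rw [Toper_of_ne_zero P f hx.ne']
    simp_rw [hP']
    rw [(hasSum_geometric_mul_integral_toperIntegrand hq hf hf1 hx.le).tsum_eq]
    field_simp
    ring
  · rw [Toper_zero]
    simp_rw [hP', mul_assoc]
    rw [tsum_mul_left, (hasSum_pow_mul_setIntegral_erlangDensity measurableSet_Ioi subset_rfl hf
      (fun z hz => hf1 z (le_of_lt hz)) hq).tsum_eq]

theorem stmt_18 (p : ℝ) (hp : 0 < p) (hp1 : p < 1)
    (P : ℕ → ℝ) (hP : ∀ k : ℕ, 1 ≤ k → P k = p * (1 - p) ^ (k - 1)) (hP0 : P 0 = 0)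
    (f : ℝ → ℝ) (hf : Measurable f) (hf01 : ∀ x, 0 ≤ x → f x ∈ Icc (0 : ℝ) 1) :
    (∀ x : ℝ, 0 < x →
      Toper P f x =
        (p * x - 1 + Real.exp (-(p * x))) / (p * x) +
          (p / x) * ∫ z in Ioi (0 : ℝ),
            min x z * Real.exp (-(z * (1 - (1 - p) * f z)))) ∧
    Toper P f 0 = p * ∫ z in Ioi (0 : ℝ), Real.exp (-(z * (1 - (1 - p) * f z))) :=
  stmt_18_general p hp hp1 P hP f hf hf01
end

section
/- Let p ∈ (0,1) and let P be the geometric distribution P(k) = p·(1−p)^{k−1} for k ≥ 1. Then g₂(x) = p·(1−p)·e^{−px} for all x ≥ 0; for every integer i ≥ 0 and x ≥ 0, G_i(x) = ((1−p)/p)^i · e^{−i·p·x} / (i!)², so that L(β,x) = ∑_{i=0}^∞ (−(1−p)·e^{−px}/(p·β))^i/(i!)² = J₀(√(4(1−p)e^{−px}/(pβ))); and β₀ = 4(1−p)/(r₀²·p), where r₀ is the smallest positive zero of the Bessel function J₀(x) = ∑_{i=0}^∞ (−1)^i·(x/2)^{2i}/(i!)². -/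
open MeasureTheory Real Set Filter

/-- `g₂(x) = e^{-x} ∑_{k≥2} P(k) x^{k-2}/(k-2)!`. -/
noncomputable def g2 (P : ℕ → ℝ) (x : ℝ) : ℝ :=
  Real.exp (-x) * ∑' k : ℕ, P (k + 2) * x ^ k / (Nat.factorial k : ℝ)

/-- `G_0(x) = 1`, `G_{i+1}(x) = ∫_x^∞ ∫_y^∞ g₂(z) G_i(z) dz dy`. -/
noncomputable def Gfun (P : ℕ → ℝ) : ℕ → ℝ → ℝ
  | 0 => fun _ => 1
  | (i + 1) => fun x => ∫ y in Ioi x, ∫ z in Ioi y, g2 P z * Gfun P i z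

/-- `L(β,x) = ∑_{i=0}^∞ G_i(x) (-1/β)^i` (real version). -/
noncomputable def Lfun (P : ℕ → ℝ) (β : ℝ) (x : ℝ) : ℝ :=
  ∑' i : ℕ, Gfun P i x * (-1 / β) ^ i

/-- The Bessel function of the first kind of order zero,
`J₀(x) = ∑_{i=0}^∞ (-1)^i (x/2)^{2i} / (i!)²`. -/
noncomputable def J0 (x : ℝ) : ℝ :=
  ∑' i : ℕ, (-1) ^ i * (x / 2) ^ (2 * i) / (Nat.factorial i : ℝ) ^ 2

/-! For geometric `P` the kernel `g₂` is a single exponential `c e^{-a z}` with `c = p(1-p)`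
and `a = p`, and integrating `e^{-b z}` twice over `(x, ∞)` divides it by `b²`; hence
`G_i = (c/a²)^i e^{-iax} / (i!)²` and `L(β, ·)` is the series of `J₀` evaluated at
`√(4 c e^{-ax} / (a² β))`. So `L(β, 0) = J₀(√(K/β))` with `K = 4(1-p)/p`. Since `√(K/β₀)` is a
positive zero of `J₀`, it is at least `r₀`; if it were larger, `β = K/r₀² > β₀` would give
`L(β, 0) = J₀(r₀) = 0`. -/

lemma integral_Ioi_exp_neg_mul {b : ℝ} (hb : 0 < b) (y : ℝ) :
    ∫ z in Ioi y, exp (-(b * z)) = exp (-(b * y)) / b := by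
  simp_rw [← neg_mul]
  rw [integral_exp_mul_Ioi (neg_lt_zero.mpr hb), neg_div_neg_eq]

lemma integral_Ioi_integral_Ioi_exp_neg_mul {b : ℝ} (hb : 0 < b) (x : ℝ) :
    ∫ y in Ioi x, ∫ z in Ioi y, exp (-(b * z)) = exp (-(b * x)) / b ^ 2 := by
  simp_rw [integral_Ioi_exp_neg_mul hb, div_eq_mul_inv, integral_mul_const,
    ← div_eq_mul_inv, integral_Ioi_exp_neg_mul hb]
  ring

lemma Gfun_eq_of_g2_eq {P : ℕ → ℝ} {c a : ℝ} (ha : 0 < a)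
    (hg : ∀ z, 0 ≤ z → g2 P z = c * exp (-(a * z))) (i : ℕ) {x : ℝ} (hx : 0 ≤ x) :
    Gfun P i x = (c / a ^ 2) ^ i * exp (-(i * a * x)) / (i.factorial : ℝ) ^ 2 := by
  induction i generalizing x with
  | zero => simp [Gfun]
  | succ i ih =>
    set b : ℝ := (i + 1) * a
    set K : ℝ := c * (c / a ^ 2) ^ i / (i.factorial : ℝ) ^ 2
    have hb : 0 < b := by positivity
    have hintegrand : ∀ z, 0 ≤ z → g2 P z * Gfun P i z = K * exp (-(b * z)) := by
      intro z hz
      rw [hg z hz, ih hz, show -(b * z) = -(a * z) + -(i * a * z) by ring, exp_add]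
      ring
    have hinner : ∀ y ∈ Ioi x,
        ∫ z in Ioi y, g2 P z * Gfun P i z = K * ∫ z in Ioi y, exp (-(b * z)) := by
      intro y hy
      rw [← integral_const_mul]
      exact setIntegral_congr_fun measurableSet_Ioi fun z hz =>
        hintegrand z (hx.trans (le_of_lt hy) |>.trans (le_of_lt hz))
    change ∫ y in Ioi x, ∫ z in Ioi y, g2 P z * Gfun P i z = _
    rw [setIntegral_congr_fun measurableSet_Ioi hinner, integral_const_mul,
      integral_Ioi_integral_Ioi_exp_neg_mul hb,
      show -(((i + 1 : ℕ) : ℝ) * a * x) = -(b * x) by push_cast; ring, Nat.factorial_succ]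
    generalize exp (-(b * x)) = E
    simp only [K, b, div_pow]
    push_cast
    field_simp
    ring

lemma Lfun_eq_tsum_of_g2_eq {P : ℕ → ℝ} {c a : ℝ} (ha : 0 < a)
    (hg : ∀ z, 0 ≤ z → g2 P z = c * exp (-(a * z))) (β : ℝ) {x : ℝ} (hx : 0 ≤ x) :
    Lfun P β x =
      ∑' i : ℕ, (-(c / a ^ 2 * exp (-(a * x)) / β)) ^ i / (i.factorial : ℝ) ^ 2 := by
  refine tsum_congr fun i => ?_
  rw [Gfun_eq_of_g2_eq ha hg i hx, show -(i * a * x) = i * -(a * x) by ring, exp_nat_mul]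
  ring

lemma J0_sqrt {t : ℝ} (ht : 0 ≤ t) :
    J0 (√t) = ∑' i : ℕ, (-(t / 4)) ^ i / (i.factorial : ℝ) ^ 2 := by
  refine tsum_congr fun i => ?_
  rw [pow_mul, div_pow, sq_sqrt ht, ← mul_pow]
  ring

lemma eq_div_sq_of_first_pos_zero {f : ℝ → ℝ} {K r₀ β₀ : ℝ} (hK : 0 < K) (hr₀ : 0 < r₀)
    (hfr₀ : f r₀ = 0) (hr₀min : ∀ r, 0 < r → r < r₀ → f r ≠ 0) (hβ₀ : 0 < β₀)
    (hfβ₀ : f √(K / β₀) = 0) (hpos : ∀ β, β₀ < β → f √(K / β) ≠ 0) :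
    β₀ = K / r₀ ^ 2 := by
  set s := √(K / β₀)
  have hs : 0 < s := sqrt_pos.mpr (by positivity)
  have hs2 : s ^ 2 = K / β₀ := sq_sqrt (by positivity)
  have hr₀s : r₀ ≤ s := not_lt.mp fun h => hr₀min s hs h hfβ₀
  have hsr₀ : s ≤ r₀ := by
    by_contra! h
    refine hpos (K / r₀ ^ 2) ?_ ?_
    · rw [lt_div_iff₀ (by positivity), ← lt_div_iff₀' hβ₀, ← hs2]
      gcongr
    · rwa [div_div_cancel₀ hK.ne', sqrt_sq hr₀.le]
  rw [le_antisymm hsr₀ hr₀s] at hs2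
  rw [eq_div_iff (by positivity), hs2, mul_div_cancel₀ _ hβ₀.ne']

section Geometric

variable {p : ℝ} {P : ℕ → ℝ} (hP : ∀ k : ℕ, 1 ≤ k → P k = p * (1 - p) ^ (k - 1))
include hP

lemma g2_geometric (x : ℝ) : g2 P x = p * (1 - p) * exp (-(p * x)) := by
  have hterm : ∀ k : ℕ, P (k + 2) * x ^ k / (k.factorial : ℝ)
      = p * (1 - p) * (((1 - p) * x) ^ k / (k.factorial : ℝ)) := by
    intro k
    rw [hP (k + 2) (by omega), show k + 2 - 1 = k + 1 from rfl, mul_pow]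
    ring
  have hexp : ∑' k : ℕ, ((1 - p) * x) ^ k / (k.factorial : ℝ) = exp ((1 - p) * x) := by
    rw [exp_eq_exp_ℝ]
    exact (NormedSpace.expSeries_div_hasSum_exp _).tsum_eq
  rw [g2, tsum_congr hterm, tsum_mul_left, hexp, show -(p * x) = -x + (1 - p) * x by ring,
    exp_add]
  ring

lemma Gfun_geometric (hp : 0 < p) (i : ℕ) {x : ℝ} (hx : 0 ≤ x) :
    Gfun P i x = ((1 - p) / p) ^ i * exp (-(i * p * x)) / (i.factorial : ℝ) ^ 2 := by
  rw [Gfun_eq_of_g2_eq hp (fun z _ => g2_geometric hP z) i hx]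
  congr 3
  field_simp

lemma Lfun_geometric_eq_tsum (hp : 0 < p) (β : ℝ) {x : ℝ} (hx : 0 ≤ x) :
    Lfun P β x =
      ∑' i : ℕ, (-((1 - p) * exp (-(p * x)) / (p * β))) ^ i / (i.factorial : ℝ) ^ 2 := by
  rw [Lfun_eq_tsum_of_g2_eq hp (fun z _ => g2_geometric hP z) β hx]
  congr! 4
  field_simp

lemma Lfun_geometric_eq_J0 (hp : 0 < p) (hp1 : p ≤ 1) {β : ℝ} (hβ : 0 < β) {x : ℝ}
    (hx : 0 ≤ x) : Lfun P β x = J0 √(4 * (1 - p) * exp (-(p * x)) / (p * β)) := by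
  have hq : 0 ≤ 1 - p := sub_nonneg.mpr hp1
  rw [Lfun_geometric_eq_tsum hP hp β hx, J0_sqrt (by positivity)]
  congr! 4
  ring

end Geometric

theorem stmt_19_general (p : ℝ) (hp : 0 < p) (hp1 : p < 1)
    (P : ℕ → ℝ) (hP : ∀ k : ℕ, 1 ≤ k → P k = p * (1 - p) ^ (k - 1))
    (r₀ : ℝ) (hr₀pos : 0 < r₀) (hr₀zero : J0 r₀ = 0)
    (hr₀min : ∀ r : ℝ, 0 < r → r < r₀ → J0 r ≠ 0)
    (β₀ : ℝ) (hβ₀pos : 0 < β₀) (hL0 : Lfun P β₀ 0 = 0)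
    (hLpos : ∀ β : ℝ, β₀ < β → ∀ x : ℝ, 0 ≤ x → 0 < Lfun P β x) :
    (∀ x : ℝ, 0 ≤ x → g2 P x = p * (1 - p) * Real.exp (-(p * x))) ∧
    (∀ i : ℕ, ∀ x : ℝ, 0 ≤ x →
      Gfun P i x =
        ((1 - p) / p) ^ i * Real.exp (-((i : ℝ) * p * x)) / (Nat.factorial i : ℝ) ^ 2) ∧
    (∀ β : ℝ, β ≠ 0 → ∀ x : ℝ, 0 ≤ x →
      Lfun P β x =
        ∑' i : ℕ, (-((1 - p) * Real.exp (-(p * x)) / (p * β))) ^ i /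
          (Nat.factorial i : ℝ) ^ 2) ∧
    (∀ β : ℝ, 0 < β → ∀ x : ℝ, 0 ≤ x →
      Lfun P β x = J0 (Real.sqrt (4 * (1 - p) * Real.exp (-(p * x)) / (p * β)))) ∧
    β₀ = 4 * (1 - p) / (r₀ ^ 2 * p) := by
  have hL : ∀ β, 0 < β → ∀ x, 0 ≤ x → Lfun P β x = _ :=
    fun β hβ x hx => Lfun_geometric_eq_J0 hP hp hp1.le hβ hx
  have hL_zero : ∀ β, 0 < β → Lfun P β 0 = J0 √(4 * (1 - p) / p / β) := by
    intro β hβ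
    rw [hL β hβ 0 le_rfl, mul_zero, neg_zero, exp_zero, mul_one, div_div]
  refine ⟨fun x _ => g2_geometric hP x, fun i x hx => Gfun_geometric hP hp i hx,
    fun β _ x hx => Lfun_geometric_eq_tsum hP hp β hx, hL, ?_⟩
  have hK : 0 < 4 * (1 - p) / p := div_pos (by linarith) hp
  have hJβ₀ : J0 √(4 * (1 - p) / p / β₀) = 0 := hL_zero β₀ hβ₀pos ▸ hL0
  have hJβ : ∀ β, β₀ < β → J0 √(4 * (1 - p) / p / β) ≠ 0 := fun β hβ =>
    hL_zero β (hβ₀pos.trans hβ) ▸ (hLpos β hβ 0 le_rfl).ne'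
  rw [eq_div_sq_of_first_pos_zero hK hr₀pos hr₀zero hr₀min hβ₀pos hJβ₀ hJβ]
  ring

theorem stmt_19 (p : ℝ) (hp : 0 < p) (hp1 : p < 1)
    (P : ℕ → ℝ) (hP : ∀ k : ℕ, 1 ≤ k → P k = p * (1 - p) ^ (k - 1)) (hP0 : P 0 = 0)
    (r₀ : ℝ) (hr₀pos : 0 < r₀) (hr₀zero : J0 r₀ = 0)
    (hr₀min : ∀ r : ℝ, 0 < r → r < r₀ → J0 r ≠ 0)
    (β₀ : ℝ) (hβ₀pos : 0 < β₀) (hL0 : Lfun P β₀ 0 = 0)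
    (hLnn : ∀ x : ℝ, 0 ≤ x → 0 ≤ Lfun P β₀ x)
    (hLpos : ∀ β : ℝ, β₀ < β → ∀ x : ℝ, 0 ≤ x → 0 < Lfun P β x) :
    (∀ x : ℝ, 0 ≤ x → g2 P x = p * (1 - p) * Real.exp (-(p * x))) ∧
    (∀ i : ℕ, ∀ x : ℝ, 0 ≤ x →
      Gfun P i x =
        ((1 - p) / p) ^ i * Real.exp (-((i : ℝ) * p * x)) / (Nat.factorial i : ℝ) ^ 2) ∧
    (∀ β : ℝ, β ≠ 0 → ∀ x : ℝ, 0 ≤ x →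
      Lfun P β x =
        ∑' i : ℕ, (-((1 - p) * Real.exp (-(p * x)) / (p * β))) ^ i /
          (Nat.factorial i : ℝ) ^ 2) ∧
    (∀ β : ℝ, 0 < β → ∀ x : ℝ, 0 ≤ x →
      Lfun P β x = J0 (Real.sqrt (4 * (1 - p) * Real.exp (-(p * x)) / (p * β)))) ∧
    β₀ = 4 * (1 - p) / (r₀ ^ 2 * p) :=
  stmt_19_general p hp hp1 P hP r₀ hr₀pos hr₀zero hr₀min β₀ hβ₀pos hL0 hLpos
end
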